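/- Let (M²,g) be a Riemannian surface and T a symmetric (1,1)-tensor field satisfying grad(trace T) = 2 div T. Then the following are equivalent: (i) T is a Codazzi tensor field; (ii) trace T is constant; (iii) div T = 0. -/

import Mathlib

/-- Abstract model of the `C^∞(M)`-module of (local) vector fields on an
`m`-dimensional Riemannian manifold, equipped with an orthonormal frame `E`,
the Levi-Civita connection `D`, and the derivation action `act` of vector
fields on smooth functions `F`. -/
structure RiemannianFrame (m : ℕ) where
  F : Type
  V : Type
  [instCommRing : CommRing F]
  [instAlgebra : Algebra ℝ F]
  [instAddCommGroup : AddCommGroup V]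
  [instModule : Module F V]
  g : V → V → F
  D : V → V → V
  act : V → F → F
  bracket : V → V → V
  E : Fin m → V
  g_symm : ∀ X Y, g X Y = g Y X
  g_addl : ∀ X Y Z, g (X + Y) Z = g X Z + g Y Z
  g_smull : ∀ (f : F) (X Y : V), g (f • X) Y = f * g X Y
  act_addf : ∀ (X : V) (f h : F), act X (f + h) = act X f + act X h
  act_mulf : ∀ (X : V) (f h : F), act X (f * h) = act X f * h + f * act X h
  act_addX : ∀ (X Y : V) (f : F), act (X + Y) f = act X f + act Y f
  act_smulX : ∀ (f : F) (X : V) (h : F), act (f • X) h = f * act X h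
  act_const : ∀ (X : V) (r : ℝ), act X (algebraMap ℝ F r) = 0
  D_addX : ∀ X Y Z, D (X + Y) Z = D X Z + D Y Z
  D_smulX : ∀ (f : F) (X Y : V), D (f • X) Y = f • D X Y
  D_addY : ∀ X Y Z, D X (Y + Z) = D X Y + D X Z
  D_leibniz : ∀ (X : V) (f : F) (Y : V), D X (f • Y) = act X f • Y + f • D X Y
  metric_compat : ∀ X Y Z, act X (g Y Z) = g (D X Y) Z + g Y (D X Z)
  torsion_free : ∀ X Y, D X Y - D Y X = bracket X Y
  bracket_act : ∀ (X Y : V) (f : F),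
    act (bracket X Y) f = act X (act Y f) - act Y (act X f)
  frame_orthonormal : ∀ i j, g (E i) (E j) = if i = j then 1 else 0
  frame_span : ∀ X, X = ∑ i, g X (E i) • E i

attribute [instance] RiemannianFrame.instCommRing RiemannianFrame.instAlgebra
  RiemannianFrame.instAddCommGroup RiemannianFrame.instModule

namespace RiemannianFrame

variable {m : ℕ} (R : RiemannianFrame m)

/-- The covariant derivative `(∇_X T)(Y)` of a `(1,1)`-tensor field `T`. -/
def covT (T : R.V → R.V) (X Y : R.V) : R.V := R.D X (T Y) - T (R.D X Y)

/-- `T` is a `(1,1)`-tensor field: it is `C^∞(M)`-linear. -/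
def IsTensor (T : R.V → R.V) : Prop :=
  (∀ X Y, T (X + Y) = T X + T Y) ∧ ∀ (f : R.F) (X : R.V), T (f • X) = f • T X

/-- `T` is symmetric with respect to the metric. -/
def IsSymmT (T : R.V → R.V) : Prop := ∀ X Y, R.g (T X) Y = R.g X (T Y)

/-- `T` is a Codazzi tensor field: `(∇_X T)(Y) = (∇_Y T)(X)`. -/
def IsCodazzi (T : R.V → R.V) : Prop := ∀ X Y, R.covT T X Y = R.covT T Y X

/-- The trace of a `(1,1)`-tensor field. -/
def traceT (T : R.V → R.V) : R.F := ∑ i, R.g (T (R.E i)) (R.E i)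

/-- The divergence of a `(1,1)`-tensor field, `div T = Σᵢ (∇_{Eᵢ}T)(Eᵢ)`. -/
def divT (T : R.V → R.V) : R.V := ∑ i, R.covT T (R.E i) (R.E i)

/-- The gradient of a function. -/
def gradF (f : R.F) : R.V := ∑ i, R.act (R.E i) f • R.E i

/-- The divergence of a vector field. -/
def divV (Z : R.V) : R.F := ∑ i, R.g (R.D (R.E i) Z) (R.E i)

/-- The geometric Laplacian `Δ f = -div(grad f)`
(sign convention matching `Δ^R T = -trace ∇²T`). -/
def lapF (f : R.F) : R.F := - R.divV (R.gradF f)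

/-- The pointwise inner product `⟨T,S⟩` of two `(1,1)`-tensor fields. -/
def innerTT (T S : R.V → R.V) : R.F :=
  ∑ i, ∑ j, R.g (T (R.E i)) (R.E j) * R.g (S (R.E i)) (R.E j)

/-- The pointwise squared norm `|T|²`. -/
def normT2 (T : R.V → R.V) : R.F := R.innerTT T T

/-- The pointwise inner product `⟨∇T, ∇S⟩` of the `(0,3)`-tensors `∇T`, `∇S`. -/
def innerNabla (T S : R.V → R.V) : R.F :=
  ∑ i, R.innerTT (fun Y => R.covT T (R.E i) Y) (fun Y => R.covT S (R.E i) Y)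

/-- The pointwise squared norm `|∇T|²`. -/
def normNabla2 (T : R.V → R.V) : R.F := R.innerNabla T T

/-- The second covariant derivative `(∇²T)(X,Y,Z) = (∇_X (∇T))(Y,Z)`. -/
def nabla2 (T : R.V → R.V) (X Y Z : R.V) : R.V :=
  R.D X (R.covT T Y Z) - R.covT T (R.D X Y) Z - R.covT T Y (R.D X Z)

/-- `trace(∇²T)`, as a `(1,1)`-tensor field. -/
def traceNabla2 (T : R.V → R.V) (X : R.V) : R.V := ∑ i, R.nabla2 T (R.E i) (R.E i) X

/-- The rough Laplacian `Δ^R T = -trace ∇²T`. -/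
def roughLap (T : R.V → R.V) (X : R.V) : R.V := - R.traceNabla2 T X

/-- The curvature tensor `R(X,Y)Z = ∇_X∇_Y Z - ∇_Y∇_X Z - ∇_{[X,Y]}Z`. -/
def curv (X Y Z : R.V) : R.V :=
  R.D X (R.D Y Z) - R.D Y (R.D X Z) - R.D (R.bracket X Y) Z

/-- A function is constant iff all its directional derivatives vanish
(`M` is assumed connected). -/
def IsConst (f : R.F) : Prop := ∀ X, R.act X f = 0

end RiemannianFrame

/-- The Gaussian curvature of a surface, `K = ⟨R(E₁,E₂)E₁, E₂⟩`. -/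
def RiemannianFrame.K (R : RiemannianFrame 2) : R.F :=
  R.g (R.curv (R.E 0) (R.E 1) (R.E 0)) (R.E 1)

/-!
For symmetric `T` one has, in every dimension,
`⟨div T - grad (trace T), X⟩ = Σᵢ ⟨(∇_{Eᵢ}T) X - (∇_X T) Eᵢ, Eᵢ⟩`,
since `X (trace T) = trace (∇_X T)`. Hence a Codazzi tensor satisfies `div T = grad (trace T)`.
On a surface the converse holds: the skew part of `∇T` has the single component
`(∇_{E₁}T) E₂ - (∇_{E₂}T) E₁`, and the identity at `X = E₂` and `X = E₁` gives its two
coordinates. Under `grad (trace T) = 2 div T`, each of the three conditions therefore amounts to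
`div T = grad (trace T) = 0`.
-/

lemma sum_sum_mul_eq_zero_of_skew {α ι : Type*} [CommRing α] [Fintype ι]
    (h2 : IsUnit (2 : α)) (s ω : ι → ι → α) (hs : ∀ i j, s j i = s i j)
    (hω : ∀ i j, ω j i = - ω i j) : ∑ i, ∑ j, s i j * ω i j = 0 := by
  set S := ∑ i, ∑ j, s i j * ω i j
  have hneg : S = -S := by
    calc S = ∑ i, ∑ j, s j i * ω j i := Finset.sum_comm
      _ = ∑ i, ∑ j, -(s i j * ω i j) :=
        Finset.sum_congr rfl fun i _ => Finset.sum_congr rfl fun j _ => by rw [hs, hω, mul_neg]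
      _ = -S := by simp only [Finset.sum_neg_distrib, S]
  exact h2.mul_right_eq_zero.mp (by linear_combination hneg)

namespace RiemannianFrame

section General

variable {m : ℕ} (R : RiemannianFrame m)

lemma isUnit_two : IsUnit (2 : R.F) := by
  have h := (IsUnit.mk0 (2 : ℝ) two_ne_zero).map (algebraMap ℝ R.F)
  rwa [map_ofNat] at h

def gLeft (Y : R.V) : R.V →ₗ[R.F] R.F where
  toFun X := R.g X Y
  map_add' X X' := R.g_addl X X' Y
  map_smul' f X := R.g_smull f X Y

def actLeft (f : R.F) : R.V →ₗ[R.F] R.F where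
  toFun X := R.act X f
  map_add' X X' := R.act_addX X X' f
  map_smul' c X := R.act_smulX c X f

lemma g_zero_left (Y : R.V) : R.g 0 Y = 0 := (R.gLeft Y).map_zero

lemma g_sub_left (X X' Y : R.V) : R.g (X - X') Y = R.g X Y - R.g X' Y :=
  (R.gLeft Y).map_sub X X'

lemma g_sum_left {ι : Type*} (s : Finset ι) (X : ι → R.V) (Y : R.V) :
    R.g (∑ i ∈ s, X i) Y = ∑ i ∈ s, R.g (X i) Y :=
  map_sum (R.gLeft Y) X s

lemma act_sum {ι : Type*} (X : R.V) (s : Finset ι) (f : ι → R.F) :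
    R.act X (∑ i ∈ s, f i) = ∑ i ∈ s, R.act X (f i) :=
  map_sum (AddMonoidHom.mk' (R.act X) (R.act_addf X)) f s

lemma act_one (X : R.V) : R.act X 1 = 0 := by
  simpa using R.act_const X 1

lemma ext_frame {Z W : R.V} (h : ∀ i, R.g Z (R.E i) = R.g W (R.E i)) : Z = W := by
  rw [R.frame_span Z, R.frame_span W]
  simp only [h]

lemma g_eq_sum_frame (X Y : R.V) : R.g X Y = ∑ i, R.g X (R.E i) * R.g Y (R.E i) := by
  conv_lhs => rw [R.frame_span Y, R.g_symm, R.g_sum_left]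
  simp only [R.g_smull, R.g_symm (R.E _) X, mul_comm]

lemma g_gradF (f : R.F) (X : R.V) : R.g (R.gradF f) X = R.act X f := by
  conv_rhs => rw [R.frame_span X]
  change _ = R.actLeft f _
  simp only [gradF, map_sum, map_smul, g_sum_left, g_smull, smul_eq_mul, R.g_symm (R.E _) X]
  exact Finset.sum_congr rfl fun i _ => mul_comm _ _

lemma gradF_eq_zero_iff_isConst (f : R.F) : R.gradF f = 0 ↔ R.IsConst f := by
  refine ⟨fun h X => ?_, fun h => ?_⟩
  · rw [← g_gradF, h, g_zero_left]
  · exact Finset.sum_eq_zero fun i _ => by rw [h, zero_smul]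

lemma g_D_frame_skew (X : R.V) (i j : Fin m) :
    R.g (R.D X (R.E j)) (R.E i) = - R.g (R.D X (R.E i)) (R.E j) := by
  have h := R.metric_compat X (R.E i) (R.E j)
  have hconst : R.act X (R.g (R.E i) (R.E j)) = 0 := by
    rw [R.frame_orthonormal]
    split_ifs
    · exact R.act_one X
    · simpa using R.act_const X 0
  rw [hconst, R.g_symm (R.E i)] at h
  linear_combination -h

variable {R} {T : R.V → R.V}

lemma sum_g_T_D_frame (hTsymm : R.IsSymmT T) (X : R.V) :
    ∑ i, R.g (T (R.E i)) (R.D X (R.E i)) = 0 := by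
  rw [Finset.sum_congr rfl fun i _ => R.g_eq_sum_frame (T (R.E i)) _]
  refine sum_sum_mul_eq_zero_of_skew R.isUnit_two _ _ (fun i j => ?_) (R.g_D_frame_skew X)
  rw [hTsymm, R.g_symm]

lemma g_covT_comm (hTsymm : R.IsSymmT T) (Z A B : R.V) :
    R.g (R.covT T Z A) B = R.g (R.covT T Z B) A := by
  have hAB := R.metric_compat Z (T A) B
  have hBA := R.metric_compat Z (T B) A
  rw [show R.g (T A) B = R.g (T B) A by rw [hTsymm, R.g_symm]] at hAB
  simp only [covT, g_sub_left]
  rw [show R.g (T (R.D Z A)) B = R.g (T B) (R.D Z A) by rw [hTsymm, R.g_symm],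
    show R.g (T (R.D Z B)) A = R.g (T A) (R.D Z B) by rw [hTsymm, R.g_symm]]
  linear_combination hBA - hAB

lemma act_traceT (hTsymm : R.IsSymmT T) (X : R.V) :
    R.act X (R.traceT T) = ∑ i, R.g (R.covT T X (R.E i)) (R.E i) := by
  have hsym : ∀ i, R.g (T (R.D X (R.E i))) (R.E i) = R.g (T (R.E i)) (R.D X (R.E i)) :=
    fun i => by rw [hTsymm, R.g_symm]
  simp only [traceT, covT, act_sum, metric_compat, g_sub_left, hsym, Finset.sum_add_distrib,
    Finset.sum_sub_distrib, sum_g_T_D_frame hTsymm, add_zero, sub_zero]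

lemma g_divT (hTsymm : R.IsSymmT T) (X : R.V) :
    R.g (R.divT T) X = ∑ i, R.g (R.covT T (R.E i) X) (R.E i) := by
  simp only [divT, g_sum_left, g_covT_comm hTsymm _ _ X]

lemma g_divT_sub_act_traceT (hTsymm : R.IsSymmT T) (X : R.V) :
    R.g (R.divT T) X - R.act X (R.traceT T)
      = ∑ i, R.g (R.covT T (R.E i) X - R.covT T X (R.E i)) (R.E i) := by
  simp only [g_divT hTsymm, act_traceT hTsymm, g_sub_left, Finset.sum_sub_distrib]

lemma IsCodazzi.divT_eq_gradF_traceT (hTsymm : R.IsSymmT T) (hC : R.IsCodazzi T) :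
    R.divT T = R.gradF (R.traceT T) := by
  refine R.ext_frame fun i => ?_
  rw [g_gradF, ← sub_eq_zero, g_divT_sub_act_traceT hTsymm]
  simp only [hC _ (R.E i), sub_self, g_zero_left, Finset.sum_const_zero]

def covTₗ (hT : R.IsTensor T) : R.V →ₗ[R.F] R.V →ₗ[R.F] R.V :=
  LinearMap.mk₂ R.F (R.covT T)
    (fun X X' Y => by simp only [covT, R.D_addX, hT.1]; abel)
    (fun f X Y => by simp only [covT, R.D_smulX, hT.2, smul_sub])
    (fun X Y Y' => by simp only [covT, R.D_addY, hT.1]; abel)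
    (fun f X Y => by simp only [covT, hT.1, hT.2, R.D_leibniz, smul_sub]; abel)

lemma covT_eq_sum_frame (hT : R.IsTensor T) (X Y : R.V) :
    R.covT T X Y
      = ∑ i, ∑ j, (R.g X (R.E i) * R.g Y (R.E j)) • R.covT T (R.E i) (R.E j) := by
  change R.covTₗ hT X Y = _
  conv_lhs => rw [R.frame_span X, R.frame_span Y]
  simp only [map_sum, map_smul, LinearMap.sum_apply, LinearMap.smul_apply, Finset.smul_sum,
    smul_smul]
  rw [Finset.sum_comm]
  exact Finset.sum_congr rfl fun i _ => Finset.sum_congr rfl fun j _ => by rw [mul_comm]; rfl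

lemma isCodazzi_of_frame (hT : R.IsTensor T)
    (h : ∀ i j, R.covT T (R.E i) (R.E j) = R.covT T (R.E j) (R.E i)) : R.IsCodazzi T := by
  intro X Y
  rw [covT_eq_sum_frame hT X, covT_eq_sum_frame hT Y, Finset.sum_comm]
  simp only [h, mul_comm]

end General

lemma isCodazzi_of_divT_eq_gradF_traceT {R : RiemannianFrame 2} {T : R.V → R.V}
    (hT : R.IsTensor T) (hTsymm : R.IsSymmT T) (h : R.divT T = R.gradF (R.traceT T)) :
    R.IsCodazzi T := by
  have key : ∀ X, ∑ i, R.g (R.covT T (R.E i) X - R.covT T X (R.E i)) (R.E i) = 0 := by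
    intro X
    rw [← g_divT_sub_act_traceT hTsymm, h, g_gradF, sub_self]
  have h01 : R.covT T (R.E 0) (R.E 1) = R.covT T (R.E 1) (R.E 0) := by
    refine R.ext_frame (Fin.forall_fin_two.mpr ⟨?_, ?_⟩)
    · have h1 := key (R.E 1)
      simp only [Fin.sum_univ_two, sub_self, add_zero, g_sub_left] at h1
      linear_combination h1
    · have h0 := key (R.E 0)
      simp only [Fin.sum_univ_two, sub_self, zero_add, g_sub_left] at h0
      linear_combination -h0
  refine isCodazzi_of_frame hT ?_
  simp only [Fin.forall_fin_two]
  exact ⟨⟨trivial, h01⟩, h01.symm, trivial⟩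

end RiemannianFrame

open RiemannianFrame

/-- On a surface, for a symmetric `(1,1)`-tensor field `T`
satisfying `grad(trace T) = 2 div T` (holomorphicity of `⟨T(∂_z),∂_z⟩`), the
following are equivalent: (i) `T` is Codazzi; (ii) `trace T` is constant;
(iii) `div T = 0`. -/
theorem stmt9 (R : RiemannianFrame 2) (T : R.V → R.V)
    (hT : R.IsTensor T) (hTsymm : R.IsSymmT T)
    (hhol : R.gradF (R.traceT T) = (2 : R.F) • R.divT T) :
    [R.IsCodazzi T, R.IsConst (R.traceT T), R.divT T = 0].TFAE := by
  have h23 : R.IsConst (R.traceT T) ↔ R.divT T = 0 := by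
    rw [← gradF_eq_zero_iff_isConst, hhol, R.isUnit_two.smul_eq_zero]
  tfae_have 1 → 3 := by
    intro hC
    have h := hC.divT_eq_gradF_traceT hTsymm
    rw [hhol, two_smul] at h
    exact left_eq_add.mp h
  tfae_have 3 → 1 := fun h3 => isCodazzi_of_divT_eq_gradF_traceT hT hTsymm <| by
    rw [h3, (gradF_eq_zero_iff_isConst R _).mpr (h23.mpr h3)]
  tfae_have 2 ↔ 3 := h23
  tfae_finish
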